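/- arXiv:2408.01689 — 2 statements merged into one kernel-verified Lean document; each statement's English description precedes it below -/
import Mathlib

section
/- Let η_t = max((ψ(θ_t) − ⟨∇f_2(θ_t), ∇f_1(θ_t)⟩)/‖∇f_1(θ_t)‖², 0) and assume 0 ≤ ψ(θ_t) ≤ α‖∇f_1(θ_t)‖^δ for some α ≥ 0 and δ ≥ 1, with ∇f_1(θ_t) ≠ 0. Then η_t ψ(θ_t) ≤ (α‖∇f_1(θ_t)‖^{δ−1} + ‖∇f_2(θ_t)‖) · α^{1/δ} · ψ(θ_t)^{1−1/δ}. -/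
open RealInnerProductSpace

/-! Cauchy–Schwarz bounds `η_t ψ` by `(ψ/‖v‖ + ‖w‖) · ψ/‖v‖`. The growth condition `ψ ≤ α‖v‖^δ`
bounds one factor `ψ/‖v‖` by `α‖v‖^{δ-1}` directly, and the other by `α^{1/δ} ψ^{1-1/δ}` after
splitting `ψ = ψ^{1/δ} ψ^{1-1/δ}` and taking `δ`-th roots in `ψ^{1/δ} ≤ α^{1/δ}‖v‖`. -/

theorem max_sub_inner_div_norm_sq_le {E : Type*} [NormedAddCommGroup E] [InnerProductSpace ℝ E]
    {v : E} (hv : v ≠ 0) (w : E) {ψ : ℝ} (hψ : 0 ≤ ψ) :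
    max ((ψ - ⟪w, v⟫) / ‖v‖ ^ 2) 0 ≤ (ψ / ‖v‖ + ‖w‖) / ‖v‖ := by
  have hN : 0 < ‖v‖ := norm_pos_iff.mpr hv
  refine max_le ?_ (by positivity)
  have hCS := (abs_le.mp (abs_real_inner_le_norm w v)).1
  calc (ψ - ⟪w, v⟫) / ‖v‖ ^ 2 ≤ (ψ + ‖w‖ * ‖v‖) / ‖v‖ ^ 2 := by gcongr; linarith
    _ = (ψ / ‖v‖ + ‖w‖) / ‖v‖ := by field_simp

theorem Real.rpow_inv_le_of_le_mul_rpow {ψ α N δ : ℝ} (hψ0 : 0 ≤ ψ) (hα : 0 ≤ α) (hN : 0 ≤ N)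
    (hδ : 0 < δ) (hψ : ψ ≤ α * N ^ δ) : ψ ^ δ⁻¹ ≤ α ^ δ⁻¹ * N := by
  calc ψ ^ δ⁻¹ ≤ (α * N ^ δ) ^ δ⁻¹ := by gcongr
    _ = α ^ δ⁻¹ * N := by
      rw [Real.mul_rpow hα (by positivity), Real.rpow_rpow_inv hN hδ.ne']

theorem Real.div_le_rpow_mul_rpow_of_le_mul_rpow {ψ α N δ : ℝ} (hψ0 : 0 ≤ ψ) (hα : 0 ≤ α)
    (hN : 0 < N) (hδ : 0 < δ) (hψ : ψ ≤ α * N ^ δ) :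
    ψ / N ≤ α ^ (1 / δ) * ψ ^ (1 - 1 / δ) := by
  have hsplit : ψ = ψ ^ δ⁻¹ * ψ ^ (1 - δ⁻¹) := by
    rw [← Real.rpow_add' hψ0 (by simp), add_sub_cancel, Real.rpow_one]
  rw [div_le_iff₀ hN, one_div]
  calc ψ = ψ ^ δ⁻¹ * ψ ^ (1 - δ⁻¹) := hsplit
    _ ≤ α ^ δ⁻¹ * N * ψ ^ (1 - δ⁻¹) := by
      gcongr; exact Real.rpow_inv_le_of_le_mul_rpow hψ0 hα hN.le hδ hψ
    _ = α ^ δ⁻¹ * ψ ^ (1 - δ⁻¹) * N := by ring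

theorem Real.div_le_mul_rpow_sub_one_of_le_mul_rpow {ψ α N δ : ℝ} (hN : 0 < N)
    (hψ : ψ ≤ α * N ^ δ) : ψ / N ≤ α * N ^ (δ - 1) := by
  rw [Real.rpow_sub_one hN.ne', mul_div_assoc']
  gcongr

theorem eta_psi_bound {d : ℕ}
    (v w : EuclideanSpace ℝ (Fin d)) (ψ α δ : ℝ)
    (hv : v ≠ 0) (hα : 0 ≤ α) (hδ : 1 ≤ δ)
    (hψ0 : 0 ≤ ψ) (hψ : ψ ≤ α * ‖v‖ ^ δ) :
    max ((ψ - ⟪w, v⟫) / ‖v‖ ^ 2) 0 * ψ ≤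
      (α * ‖v‖ ^ (δ - 1) + ‖w‖) * α ^ ((1:ℝ) / δ) * ψ ^ (1 - 1 / δ) := by
  have hN : 0 < ‖v‖ := norm_pos_iff.mpr hv
  calc max ((ψ - ⟪w, v⟫) / ‖v‖ ^ 2) 0 * ψ ≤ (ψ / ‖v‖ + ‖w‖) / ‖v‖ * ψ := by
        gcongr; exact max_sub_inner_div_norm_sq_le hv w hψ0
    _ = (ψ / ‖v‖ + ‖w‖) * (ψ / ‖v‖) := by ring
    _ ≤ (α * ‖v‖ ^ (δ - 1) + ‖w‖) * (α ^ ((1:ℝ) / δ) * ψ ^ (1 - 1 / δ)) := by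
        gcongr
        · exact Real.div_le_mul_rpow_sub_one_of_le_mul_rpow hN hψ
        · exact Real.div_le_rpow_mul_rpow_of_le_mul_rpow hψ0 hα hN (by linarith) hψ
    _ = (α * ‖v‖ ^ (δ - 1) + ‖w‖) * α ^ ((1:ℝ) / δ) * ψ ^ (1 - 1 / δ) := by ring
end

section
/- Combining the bounds ∫_0^t ψ(θ_s) ds ≤ A := f_1(θ_0) − f_1*, η_s ψ(θ_s) ≤ Υ ψ(θ_s)^{1−1/δ} for a constant Υ, and ∫_0^t ‖g_s‖² ds ≤ ∫_0^t η_s ψ(θ_s) ds + B with B := f_2(θ_0) − f_2*, one gets min_{s∈[0,t]} ‖g_s‖² ≤ Υ(A/t)^{1−1/δ} + B/t, hence min_{s∈[0,t]} ‖g_s‖ = O(1/t^{(δ−1)/(2δ)}). -/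
/-!
Bounding the minimum by the mean, `t · min ‖g‖² ≤ ∫ ‖g‖² ≤ ∫ η ψ + B`. Since `x ↦ x ^ (1 - 1/δ)`
is concave, integrating its tangent line at the mean value `A / t` of `ψ` (Jensen's inequality)
gives `∫ η ψ ≤ Υ ∫ ψ ^ (1 - 1/δ) ≤ Υ t (A / t) ^ (1 - 1/δ)`.
-/

open MeasureTheory Set

namespace Real

theorem rpow_le_tangent_line {x c p : ℝ} (hx : 0 ≤ x) (hc : 0 < c) (hp₀ : 0 ≤ p) (hp₁ : p ≤ 1) :
    x ^ p ≤ p * c ^ (p - 1) * x + (1 - p) * c ^ p := by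
  have amgm : x ^ p * c ^ (1 - p) ≤ p * x + (1 - p) * c :=
    geom_mean_le_arith_mean2_weighted hp₀ (by linarith) hx hc.le (by ring)
  calc x ^ p = x ^ p * c ^ (1 - p) * c ^ (p - 1) := by
        rw [mul_assoc, ← rpow_add hc]; norm_num
    _ ≤ (p * x + (1 - p) * c) * c ^ (p - 1) := by gcongr
    _ = p * c ^ (p - 1) * x + (1 - p) * c ^ p := by
        rw [rpow_sub_one hc.ne']
        field_simp

end Real

section

variable {α : Type*} [MeasurableSpace α] {μ : Measure α} [IsFiniteMeasure μ]
  {f ψ : α → ℝ} {A Υ p : ℝ}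

theorem integral_le_mul_rpow_div_of_le_rpow (hμ : 0 < μ.real univ) (hΥ : 0 ≤ Υ)
    (hp₀ : 0 ≤ p) (hp₁ : p ≤ 1) (hψ₀ : 0 ≤ᵐ[μ] ψ) (hψ : Integrable ψ μ) (hf : Integrable f μ)
    (hψA : ∫ x, ψ x ∂μ ≤ A) (hfψ : ∀ᵐ x ∂μ, f x ≤ Υ * ψ x ^ p) :
    ∫ x, f x ∂μ ≤ Υ * μ.real univ * (A / μ.real univ) ^ p := by
  set T := μ.real univ
  have hA : 0 ≤ A := (integral_nonneg_of_ae hψ₀).trans hψA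
  rcases hA.eq_or_lt with rfl | hA
  -- With `A = 0` there is no tangent point `A / T > 0`, but then `ψ` vanishes a.e.
  · have hψ_eq : ψ =ᵐ[μ] 0 :=
      (integral_eq_zero_iff_of_nonneg_ae hψ₀ hψ).1 (hψA.antisymm (integral_nonneg_of_ae hψ₀))
    calc ∫ x, f x ∂μ ≤ ∫ _, Υ * (0 : ℝ) ^ p ∂μ := by
          refine integral_mono_ae hf (integrable_const _) ?_
          filter_upwards [hfψ, hψ_eq] with x hx hx0
          simpa [hx0] using hx
      _ = Υ * T * (0 / T) ^ p := by rw [integral_const, smul_eq_mul, zero_div]; ring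
  · set c := A / T
    have hc : 0 < c := div_pos hA hμ
    have hAc : A = c * T := (div_mul_cancel₀ A hμ.ne').symm
    calc ∫ x, f x ∂μ ≤ ∫ x, Υ * (p * c ^ (p - 1) * ψ x + (1 - p) * c ^ p) ∂μ := by
          refine integral_mono_ae hf (((hψ.const_mul _).add (integrable_const _)).const_mul Υ) ?_
          filter_upwards [hfψ, hψ₀] with x hx hx0
          exact hx.trans (mul_le_mul_of_nonneg_left (Real.rpow_le_tangent_line hx0 hc hp₀ hp₁) hΥ)
      _ = Υ * (p * c ^ (p - 1) * ∫ x, ψ x ∂μ + (1 - p) * c ^ p * T) := by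
          rw [integral_const_mul, integral_add (hψ.const_mul _) (integrable_const _),
            integral_const_mul, integral_const, smul_eq_mul, mul_comm T]
      _ ≤ Υ * (p * c ^ (p - 1) * A + (1 - p) * c ^ p * T) := by
          gcongr
      _ = Υ * T * c ^ p := by
          rw [hAc, Real.rpow_sub_one hc.ne']
          field_simp
          ring

end

theorem sInf_image_Icc_mul_le_intervalIntegral {f : ℝ → ℝ} {a b : ℝ} (hab : a ≤ b)
    (hbdd : BddBelow (f '' Icc a b)) (hf : IntegrableOn f (Icc a b)) :
    sInf (f '' Icc a b) * (b - a) ≤ ∫ x in a..b, f x := by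
  rw [intervalIntegral.integral_of_le hab, ← Real.volume_real_Ioc_of_le hab]
  exact setIntegral_ge_of_const_le_real measurableSet_Ioc measure_Ioc_lt_top.ne
    (fun x hx => csInf_le hbdd (mem_image_of_mem f (Ioc_subset_Icc_self hx)))
    (hf.mono_set Ioc_subset_Icc_self)

theorem phase1_g_rate_general {d : ℕ}
    (g : ℝ → EuclideanSpace ℝ (Fin d)) (ψ η : ℝ → ℝ) (A B Υ δ : ℝ)
    (hΥ : 0 ≤ Υ) (hδ : 1 ≤ δ)
    (hψ0 : ∀ s, 0 ≤ ψ s)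
    (hψint : ∀ t, 0 ≤ t → MeasureTheory.IntegrableOn ψ (Set.Icc 0 t))
    (hgint : ∀ t, 0 ≤ t →
      MeasureTheory.IntegrableOn (fun s => ‖g s‖ ^ 2) (Set.Icc 0 t))
    (hηψint : ∀ t, 0 ≤ t →
      MeasureTheory.IntegrableOn (fun s => η s * ψ s) (Set.Icc 0 t))
    (h1 : ∀ t, 0 ≤ t → ∫ s in (0:ℝ)..t, ψ s ≤ A)
    (h2 : ∀ s, η s * ψ s ≤ Υ * ψ s ^ (1 - 1/δ))
    (h3 : ∀ t, 0 ≤ t →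
      ∫ s in (0:ℝ)..t, ‖g s‖ ^ 2 ≤ (∫ s in (0:ℝ)..t, η s * ψ s) + B) :
    ∀ t, 0 < t →
      sInf ((fun s => ‖g s‖ ^ 2) '' Set.Icc 0 t) ≤
        Υ * (A / t) ^ (1 - 1/δ) + B / t := by
  intro t ht
  have hp₀ : 0 ≤ 1 - 1 / δ := sub_nonneg.2 ((div_le_one (by linarith)).2 hδ)
  have hp₁ : 1 - 1 / δ ≤ 1 := sub_le_self _ (by positivity)
  have hbdd : BddBelow ((fun s => ‖g s‖ ^ 2) '' Icc 0 t) :=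
    ⟨0, by rintro _ ⟨s, -, rfl⟩; positivity⟩
  have hmin := sInf_image_Icc_mul_le_intervalIntegral ht.le hbdd (hgint t ht.le)
  have hT : (volume.restrict (Ioc 0 t)).real univ = t := by
    rw [measureReal_restrict_apply_univ, Real.volume_real_Ioc_of_le ht.le, sub_zero]
  have hηψ : ∫ s in (0:ℝ)..t, η s * ψ s ≤ Υ * t * (A / t) ^ (1 - 1 / δ) := by
    have := integral_le_mul_rpow_div_of_le_rpow (hT.symm ▸ ht) hΥ hp₀ hp₁ (ae_of_all _ hψ0)
      ((hψint t ht.le).mono_set Ioc_subset_Icc_self) ((hηψint t ht.le).mono_set Ioc_subset_Icc_self)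
      ((intervalIntegral.integral_of_le ht.le).symm.trans_le (h1 t ht.le)) (ae_of_all _ h2)
    rwa [hT, ← intervalIntegral.integral_of_le ht.le] at this
  refine le_of_mul_le_mul_right ?_ ht
  rw [add_mul, div_mul_cancel₀ _ ht.ne']
  linarith [h3 t ht.le]

theorem phase1_g_rate {d : ℕ}
    (g : ℝ → EuclideanSpace ℝ (Fin d)) (ψ η : ℝ → ℝ) (A B Υ δ : ℝ)
    (hA : 0 ≤ A) (hB : 0 ≤ B) (hΥ : 0 ≤ Υ) (hδ : 1 ≤ δ)
    (hψ0 : ∀ s, 0 ≤ ψ s) (hη0 : ∀ s, 0 ≤ η s)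
    (hψint : ∀ t, 0 ≤ t → MeasureTheory.IntegrableOn ψ (Set.Icc 0 t))
    (hgint : ∀ t, 0 ≤ t →
      MeasureTheory.IntegrableOn (fun s => ‖g s‖ ^ 2) (Set.Icc 0 t))
    (hηψint : ∀ t, 0 ≤ t →
      MeasureTheory.IntegrableOn (fun s => η s * ψ s) (Set.Icc 0 t))
    (h1 : ∀ t, 0 ≤ t → ∫ s in (0:ℝ)..t, ψ s ≤ A)
    (h2 : ∀ s, η s * ψ s ≤ Υ * ψ s ^ (1 - 1/δ))
    (h3 : ∀ t, 0 ≤ t →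
      ∫ s in (0:ℝ)..t, ‖g s‖ ^ 2 ≤ (∫ s in (0:ℝ)..t, η s * ψ s) + B) :
    ∀ t, 0 < t →
      sInf ((fun s => ‖g s‖ ^ 2) '' Set.Icc 0 t) ≤
        Υ * (A / t) ^ (1 - 1/δ) + B / t :=
  phase1_g_rate_general g ψ η A B Υ δ hΥ hδ hψ0 hψint hgint hηψint h1 h2 h3
end
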